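/- arXiv:1511.03716 — 3 statements merged into one kernel-verified Lean document; each statement's English description precedes it below -/
import Mathlib

section
/- For every positive integer n, the number of solutions (x, y) ∈ ℤ² of n = x² + xy + y² equals 6·(#{d : d | n, d ≡ 1 (mod 3)} - #{d : d | n, d ≡ 2 (mod 3)}). -/
/-!
In the Eisenstein integers `ℤ[ω]` the norm of `x + yω` is `x² + xy + y²`, so `r(n)` counts the
elements of norm `n`, and `ℤ[ω]` is Euclidean for this norm. There are six elements of norm 1,
and for a rational prime `p` and `p ∤ m` one has `r(p^v m) = (∑_{i ≤ v} χ(p)^i) r(m)`, where `χ`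
is the non-trivial character mod 3:
* `3` is a unit times `(1 + ω)²`, and `1 + ω` divides every element whose norm is divisible by 3;
* `p ≡ 2 mod 3` stays prime, because `x² + xy + y²` is never `2 mod 3`, so it divides every
  element whose norm it divides;
* `p ≡ 1 mod 3` is `π π̄` with `π, π̄` non-associate primes, because `-3` is a square mod `p`;
  an element of norm `p^(v+1) m` is either divisible by `π` or `π̄^(v+1)` times an element of
  norm `m`.
Hence `r(n) / 6` and `∑_{d ∣ n} χ(d)` are multiplicative with the same values at prime powers.
-/

open ArithmeticFunction Finset
open scoped ArithmeticFunction.zeta QuadraticAlgebra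

def chi3 : ArithmeticFunction ℤ :=
  ⟨fun d => if d % 3 = 1 then 1 else if d % 3 = 2 then -1 else 0, rfl⟩

theorem chi3_apply (d : ℕ) :
    chi3 d = if d % 3 = 1 then 1 else if d % 3 = 2 then -1 else 0 := rfl

theorem chi3_mul (a b : ℕ) : chi3 (a * b) = chi3 a * chi3 b := by
  simp only [chi3_apply, Nat.mul_mod a b]
  rcases (by omega : a % 3 = 0 ∨ a % 3 = 1 ∨ a % 3 = 2) with ha | ha | ha <;>
    rcases (by omega : b % 3 = 0 ∨ b % 3 = 1 ∨ b % 3 = 2) with hb | hb | hb <;>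
    simp [ha, hb]

theorem chi3_pow (a k : ℕ) : chi3 (a ^ k) = chi3 a ^ k := by
  induction k with
  | zero => simp [chi3_apply]
  | succ k ih => rw [pow_succ, chi3_mul, ih, pow_succ]

noncomputable def divisorSumChi3 : ArithmeticFunction ℤ := (ζ : ArithmeticFunction ℤ) * chi3

theorem isMultiplicative_divisorSumChi3 : divisorSumChi3.IsMultiplicative :=
  isMultiplicative_zeta.natCast.mul ⟨rfl, fun _ => chi3_mul _ _⟩

theorem divisorSumChi3_apply (n : ℕ) : divisorSumChi3 n = ∑ d ∈ n.divisors, chi3 d :=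
  coe_zeta_mul_apply

theorem divisorSumChi3_prime_pow {p : ℕ} (hp : p.Prime) (v : ℕ) :
    divisorSumChi3 (p ^ v) = ∑ i ∈ range (v + 1), chi3 p ^ i := by
  simp only [divisorSumChi3_apply, Nat.sum_divisors_prime_pow hp, chi3_pow]

theorem divisorSumChi3_eq_card_sub_card (n : ℕ) :
    divisorSumChi3 n =
      (#{d ∈ n.divisors | d % 3 = 1} : ℤ) - #{d ∈ n.divisors | d % 3 = 2} := by
  rw [divisorSumChi3_apply, ← sum_boole, ← sum_boole, ← sum_sub_distrib]
  refine sum_congr rfl fun d _ => ?_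
  rw [chi3_apply]
  split_ifs <;> omega

-- `ω ^ 2 = ω - 1`, so `ω = exp (iπ/3)` and `(x + yω) (x + y - yω) = x² + xy + y²`.
abbrev EisensteinInt : Type := QuadraticAlgebra ℤ (-1) 1

namespace EisensteinInt

theorem norm_eq (z : EisensteinInt) : z.norm = z.re ^ 2 + z.re * z.im + z.im ^ 2 := by
  rw [QuadraticAlgebra.norm_def]; ring

theorem four_mul_norm (z : EisensteinInt) :
    4 * z.norm = (2 * z.re + z.im) ^ 2 + 3 * z.im ^ 2 := by
  rw [norm_eq]; ring

theorem norm_nonneg (z : EisensteinInt) : 0 ≤ z.norm := by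
  nlinarith [four_mul_norm z, sq_nonneg (2 * z.re + z.im), sq_nonneg z.im]

theorem norm_eq_zero {z : EisensteinInt} : z.norm = 0 ↔ z = 0 := by
  refine ⟨fun h => ?_, fun h => h ▸ QuadraticAlgebra.norm_zero⟩
  have him : z.im = 0 := by
    nlinarith [four_mul_norm z, sq_nonneg (2 * z.re + z.im), sq_nonneg z.im]
  have hre : z.re = 0 := by
    nlinarith [four_mul_norm z, sq_nonneg (2 * z.re + z.im), sq_nonneg z.im]
  ext <;> assumption

theorem norm_pos {z : EisensteinInt} (hz : z ≠ 0) : 0 < z.norm :=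
  (norm_nonneg z).lt_of_ne (Ne.symm (mt norm_eq_zero.mp hz))

theorem norm_intCast (r : ℤ) : (r : EisensteinInt).norm = r ^ 2 :=
  QuadraticAlgebra.norm_intCast r

theorem isUnit_iff_norm_eq_one {z : EisensteinInt} : IsUnit z ↔ z.norm = 1 := by
  rw [QuadraticAlgebra.isUnit_iff_norm_isUnit, Int.isUnit_iff]
  have := norm_nonneg z
  omega

instance : IsLocalHom (QuadraticAlgebra.norm : EisensteinInt →* ℤ) :=
  ⟨fun _ => QuadraticAlgebra.isUnit_iff_norm_isUnit.mpr⟩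

theorem exists_two_mul_abs_sub_mul_le (c : ℤ) {m : ℤ} (hm : 0 < m) :
    ∃ q, 2 * |c - m * q| ≤ m := by
  set q := (2 * c + m) / (2 * m)
  have h₁ := Int.emod_add_mul_ediv (2 * c + m) (2 * m)
  have h₂ := Int.emod_nonneg (2 * c + m) (by omega : 2 * m ≠ 0)
  have h₃ := Int.emod_lt_of_pos (2 * c + m) (by omega : 0 < 2 * m)
  refine ⟨q, ?_⟩
  calc 2 * |c - m * q| = |2 * (c - m * q)| := by rw [abs_mul, abs_two]
    _ ≤ m := abs_le.mpr ⟨by linarith, by linarith⟩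

theorem norm_lt_sq_of_two_mul_abs_le {z : EisensteinInt} {m : ℤ} (hre : 2 * |z.re| ≤ m)
    (him : 2 * |z.im| ≤ m) (hm : 0 < m) : z.norm < m ^ 2 := by
  have h1 : z.re * z.im ≤ |z.re| * |z.im| := by rw [← abs_mul]; exact le_abs_self _
  rw [norm_eq, ← sq_abs z.re, ← sq_abs z.im]
  nlinarith [abs_nonneg z.re, abs_nonneg z.im]

-- The quotient rounds both coordinates of `x * star y / y.norm` to a nearest integer.
theorem exists_norm_sub_mul_lt (x : EisensteinInt) {y : EisensteinInt} (hy : y ≠ 0) :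
    ∃ q, (x - y * q).norm < y.norm := by
  have hm := norm_pos hy
  obtain ⟨q₁, h₁⟩ := exists_two_mul_abs_sub_mul_le (x * star y).re hm
  obtain ⟨q₂, h₂⟩ := exists_two_mul_abs_sub_mul_le (x * star y).im hm
  refine ⟨⟨q₁, q₂⟩, lt_of_mul_lt_mul_right (a := y.norm) ?_ hm.le⟩
  have key : (x - y * ⟨q₁, q₂⟩) * star y =
      x * star y - algebraMap ℤ _ y.norm * ⟨q₁, q₂⟩ := by
    rw [QuadraticAlgebra.algebraMap_norm_eq_mul_star]; ring
  rw [← QuadraticAlgebra.norm_star y, ← map_mul, key, QuadraticAlgebra.norm_star, ← sq]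
  exact norm_lt_sq_of_two_mul_abs_le (by simpa using h₁) (by simpa using h₂) hm

noncomputable instance : EuclideanDomain EisensteinInt where
  quotient x y := if hy : y = 0 then 0 else (exists_norm_sub_mul_lt x hy).choose
  quotient_zero _ := dif_pos rfl
  remainder x y := x - y * (if hy : y = 0 then 0 else (exists_norm_sub_mul_lt x hy).choose)
  quotient_mul_add_remainder_eq _ _ := add_sub_cancel _ _
  r x y := x.norm.natAbs < y.norm.natAbs
  r_wellFounded := (measure fun z : EisensteinInt => z.norm.natAbs).wf
  remainder_lt x y hy := by
    have := (exists_norm_sub_mul_lt x hy).choose_spec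
    have := norm_nonneg (x - y * (exists_norm_sub_mul_lt x hy).choose)
    simp only [dif_neg hy]
    omega
  mul_left_not_lt x y hy := by
    have := norm_pos hy
    rw [map_mul, Int.natAbs_mul, not_lt]
    exact Nat.le_mul_of_pos_right _ (by omega)

theorem prime_of_prime_norm {z : EisensteinInt} (h : Prime z.norm) : Prime z :=
  irreducible_iff_prime.mp (Irreducible.of_map (f := QuadraticAlgebra.norm) h.irreducible)

theorem mul_star_eq_norm (z : EisensteinInt) : z * star z = (z.norm : EisensteinInt) := by
  rw [← QuadraticAlgebra.algebraMap_norm_eq_mul_star, algebraMap_int_eq, eq_intCast]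

theorem intCast_dvd_iff {r : ℤ} {z : EisensteinInt} :
    (r : EisensteinInt) ∣ z ↔ r ∣ z.re ∧ r ∣ z.im := by
  rw [← QuadraticAlgebra.algebraMap_dvd_iff, algebraMap_int_eq, eq_intCast]

theorem star_dvd_star {x y : EisensteinInt} (h : x ∣ y) : star x ∣ star y := by
  simpa only [starRingEnd_apply] using map_dvd (starRingEnd EisensteinInt) h

theorem dvd_or_star_dvd {π z : EisensteinInt} (hπ : Prime π) {q : ℤ}
    (hπq : π ∣ (q : EisensteinInt)) (hq : q ∣ z.norm) : π ∣ z ∨ star π ∣ z := by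
  have : π ∣ z * star z := mul_star_eq_norm z ▸ hπq.trans (Int.cast_dvd_cast _ _ hq)
  refine (hπ.dvd_or_dvd this).imp_right fun h => ?_
  simpa using star_dvd_star h

theorem dvd_of_dvd_norm {π z : EisensteinInt} (hπ : Prime π) (hπ' : π ∣ star π) {q : ℤ}
    (hπq : π ∣ (q : EisensteinInt)) (hq : q ∣ z.norm) : π ∣ z :=
  (dvd_or_star_dvd hπ hπq hq).elim id hπ'.trans

theorem norm_emod_three_ne_two (z : EisensteinInt) : z.norm % 3 ≠ 2 := by
  intro h
  have key : ∀ x y : ZMod 3, x ^ 2 + x * y + y ^ 2 ≠ 2 := by decide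
  apply key z.re z.im
  have := (ZMod.intCast_eq_intCast_iff' z.norm 2 3).mpr (by omega)
  rw [norm_eq] at this
  push_cast at this
  exact this

theorem re_im_mem_Icc (z : EisensteinInt) :
    z.re ∈ Set.Icc (-2 * z.norm) (2 * z.norm) ∧
      z.im ∈ Set.Icc (-2 * z.norm) (2 * z.norm) := by
  have h₁ := four_mul_norm z
  have h₂ : 4 * z.norm = (2 * z.im + z.re) ^ 2 + 3 * z.re ^ 2 := by rw [norm_eq]; ring
  have := Int.le_self_sq z.re
  have := Int.le_self_sq (-z.re)
  have := Int.le_self_sq z.im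
  have := Int.le_self_sq (-z.im)
  refine ⟨⟨?_, ?_⟩, ⟨?_, ?_⟩⟩ <;>
    nlinarith [sq_nonneg (2 * z.re + z.im), sq_nonneg (2 * z.im + z.re)]

noncomputable def reprCount (n : ℤ) : ℕ := {z : EisensteinInt | z.norm = n}.ncard

theorem setOf_norm_eq (n : ℤ) :
    {z : EisensteinInt | z.norm = n} = (QuadraticAlgebra.equivProd (-1 : ℤ) 1).symm ''
      ↑((Finset.Icc (-2 * n) (2 * n) ×ˢ Finset.Icc (-2 * n) (2 * n)).filter
        fun p : ℤ × ℤ => p.1 ^ 2 + p.1 * p.2 + p.2 ^ 2 = n) := by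
  ext z
  simp only [Set.mem_ofPred_eq, Set.mem_image, Finset.coe_filter, Finset.mem_product,
    Finset.mem_Icc]
  constructor
  · rintro rfl
    refine ⟨(z.re, z.im), ⟨?_, ?_⟩, rfl⟩
    · simpa using re_im_mem_Icc z
    · exact (norm_eq z).symm
  · rintro ⟨p, ⟨-, hp⟩, rfl⟩
    rw [← hp, norm_eq]
    rfl

theorem finite_setOf_norm_eq (n : ℤ) : {z : EisensteinInt | z.norm = n}.Finite := by
  rw [setOf_norm_eq]
  exact (Finset.finite_toSet _).image _

theorem reprCount_one : reprCount 1 = 6 := by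
  rw [reprCount, setOf_norm_eq, Set.ncard_image_of_injective _ (Equiv.injective _),
    Set.ncard_coe_finset]
  rfl

theorem natCard_eq_reprCount (n : ℤ) :
    Nat.card {p : ℤ × ℤ // p.1 ^ 2 + p.1 * p.2 + p.2 ^ 2 = n} = reprCount n := by
  rw [reprCount, ← Nat.card_coe_set_eq]
  exact Nat.card_congr <| (QuadraticAlgebra.equivProd (-1 : ℤ) 1).symm.subtypeEquiv fun p => by
    rw [Set.mem_ofPred_eq, norm_eq]; rfl

theorem image_mul_setOf_norm_eq {w : EisensteinInt} (hw : w ≠ 0) (n : ℤ) :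
    (w * ·) '' {z | z.norm = n} = {z | z.norm = w.norm * n} ∩ {z | w ∣ z} := by
  ext z
  constructor
  · rintro ⟨x, hx, rfl⟩
    exact ⟨by simp [show x.norm = n from hx], dvd_mul_right w x⟩
  · rintro ⟨hz, x, rfl⟩
    exact ⟨x, mul_left_cancel₀ (norm_pos hw).ne' (by simpa using hz), rfl⟩

theorem ncard_setOf_norm_eq_mul_inter_dvd {w : EisensteinInt} (hw : w ≠ 0) (n : ℤ) :
    ({z | z.norm = w.norm * n} ∩ {z | w ∣ z}).ncard = reprCount n := by
  rw [← image_mul_setOf_norm_eq hw, Set.ncard_image_of_injective _ (mul_right_injective₀ hw),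
    reprCount]

theorem reprCount_norm_mul {w : EisensteinInt} (hw : w ≠ 0) {n : ℤ}
    (h : ∀ z : EisensteinInt, z.norm = w.norm * n → w ∣ z) :
    reprCount (w.norm * n) = reprCount n := by
  rw [← ncard_setOf_norm_eq_mul_inter_dvd hw n, Set.inter_eq_left.mpr
    (show {z : EisensteinInt | z.norm = w.norm * n} ⊆ {z | w ∣ z} from fun z hz => h z hz),
    reprCount]

theorem reprCount_three_mul (n : ℤ) : reprCount (3 * n) = reprCount n := by
  have hnorm : (1 + ω : EisensteinInt).norm = 3 := rfl
  have hprime : Prime (1 + ω : EisensteinInt) := prime_of_prime_norm (hnorm ▸ Int.prime_three)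
  have hconj : (1 + ω : EisensteinInt) ∣ star (1 + ω) := ⟨1 - ω, by ext <;> simp⟩
  have h3 : (1 + ω : EisensteinInt) ∣ ((3 : ℤ) : EisensteinInt) :=
    ⟨star (1 + ω), by rw [mul_star_eq_norm, hnorm]⟩
  rw [← hnorm]
  exact reprCount_norm_mul hprime.ne_zero fun z hz =>
    dvd_of_dvd_norm hprime hconj h3 (hz ▸ hnorm ▸ dvd_mul_right _ _)

theorem reprCount_three_pow_mul (v : ℕ) (n : ℤ) : reprCount (3 ^ v * n) = reprCount n := by
  induction v with
  | zero => rw [pow_zero, one_mul]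
  | succ v ih => rw [pow_succ', mul_assoc, reprCount_three_mul, ih]

theorem reprCount_sq_mul_of_prime {p : ℤ} (hp : Prime (p : EisensteinInt)) (n : ℤ) :
    reprCount (p ^ 2 * n) = reprCount n := by
  have hnorm := norm_intCast p
  rw [← hnorm]
  exact reprCount_norm_mul hp.ne_zero fun z hz =>
    dvd_of_dvd_norm hp (by rw [star_intCast]) dvd_rfl
      (hz ▸ hnorm ▸ (dvd_pow_self p two_ne_zero).mul_right n)

theorem reprCount_mul_eq_zero_of_prime {p : ℤ} (hp : Prime (p : EisensteinInt)) {m : ℤ}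
    (hm : ¬ p ∣ m) : reprCount (p * m) = 0 := by
  rw [reprCount, Set.ncard_eq_zero (finite_setOf_norm_eq _)]
  refine Set.eq_empty_of_forall_notMem fun z hz => hm ?_
  obtain ⟨t, rfl⟩ := dvd_of_dvd_norm hp (by rw [star_intCast]) dvd_rfl
    (show p ∣ z.norm from hz ▸ dvd_mul_right p m)
  have hp0 : p ≠ 0 := by rintro rfl; exact hp.ne_zero Int.cast_zero
  have : p ^ 2 * t.norm = p * m := by rw [← norm_intCast, ← map_mul]; exact hz
  exact ⟨t.norm, mul_left_cancel₀ hp0 (by linear_combination -this)⟩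

theorem reprCount_pow_mul_of_prime {p : ℤ} (hp : Prime (p : EisensteinInt)) {m : ℤ}
    (hm : ¬ p ∣ m) (v : ℕ) : reprCount (p ^ v * m) = if Even v then reprCount m else 0 := by
  induction v using Nat.twoStepInduction with
  | zero => simp
  | one => simp [reprCount_mul_eq_zero_of_prime hp hm]
  | more v ih _ =>
    rw [pow_add, mul_comm (p ^ v), mul_assoc, reprCount_sq_mul_of_prime hp, ih]
    simp [Nat.even_add]

theorem star_pow_dvd_of_not_dvd {π : EisensteinInt} (hπ : Prime π) (k : ℕ) {z : EisensteinInt}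
    (hk : π.norm ^ k ∣ z.norm) (hz : ¬ π ∣ z) : star π ^ k ∣ z := by
  induction k generalizing z with
  | zero => simp
  | succ k ih =>
    obtain ⟨t, rfl⟩ := (dvd_or_star_dvd hπ ⟨star π, (mul_star_eq_norm π).symm⟩
      ((dvd_pow_self _ k.succ_ne_zero).trans hk)).resolve_left hz
    rw [map_mul, QuadraticAlgebra.norm_star, pow_succ'] at hk
    rw [pow_succ']
    exact mul_dvd_mul_left _ (ih ((mul_dvd_mul_iff_left (norm_pos hπ.ne_zero).ne').mp hk)
      fun h => hz (h.mul_left _))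

-- The elements of norm `π.norm ^ (v + 1) * m` not divisible by `π` are the multiples of
-- `star π ^ (v + 1)`.
theorem reprCount_pow_succ_mul_of_split {π : EisensteinInt} (hπ : Prime π)
    (hπ' : ¬ π ∣ star π) {m : ℤ} (hm : ¬ π.norm ∣ m) (v : ℕ) :
    reprCount (π.norm ^ (v + 1) * m) = reprCount (π.norm ^ v * m) + reprCount m := by
  have hdiff : {z | z.norm = π.norm ^ (v + 1) * m} \ {z | π ∣ z} =
      {z | z.norm = (star π ^ (v + 1)).norm * m} ∩ {z | star π ^ (v + 1) ∣ z} := by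
    ext z
    simp only [Set.mem_sdiff, Set.mem_inter_iff, Set.mem_ofPred_eq, map_pow,
      QuadraticAlgebra.norm_star]
    refine and_congr_right fun hz =>
      ⟨star_pow_dvd_of_not_dvd hπ _ (hz ▸ dvd_mul_right _ _), ?_⟩
    rintro ⟨t, rfl⟩ hdvd
    rcases hπ.dvd_or_dvd hdvd with h | h
    · exact hπ' (hπ.dvd_of_dvd_pow h)
    · apply hm
      rw [map_mul, map_pow, QuadraticAlgebra.norm_star] at hz
      rw [← mul_left_cancel₀ (pow_ne_zero _ (norm_pos hπ.ne_zero).ne') hz]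
      exact map_dvd QuadraticAlgebra.norm h
  rw [reprCount,
    ← Set.ncard_inter_add_ncard_sdiff_eq_ncard _ {z | π ∣ z} (finite_setOf_norm_eq _), hdiff,
    ncard_setOf_norm_eq_mul_inter_dvd (pow_ne_zero _ (star_ne_zero.mpr hπ.ne_zero)),
    pow_succ', mul_assoc, ncard_setOf_norm_eq_mul_inter_dvd hπ.ne_zero]

theorem reprCount_pow_mul_of_split {π : EisensteinInt} (hπ : Prime π) (hπ' : ¬ π ∣ star π)
    {m : ℤ} (hm : ¬ π.norm ∣ m) (v : ℕ) :
    reprCount (π.norm ^ v * m) = (v + 1) * reprCount m := by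
  induction v with
  | zero => simp
  | succ v ih => rw [reprCount_pow_succ_mul_of_split hπ hπ' hm, ih]; ring

theorem exists_norm_eq_of_not_prime {p : ℕ} (hp : p.Prime)
    (h : ¬ Prime ((p : ℤ) : EisensteinInt)) : ∃ z : EisensteinInt, z.norm = p := by
  have hunit : ¬ IsUnit ((p : ℤ) : EisensteinInt) := by
    rw [isUnit_iff_norm_eq_one, norm_intCast]
    nlinarith [hp.two_le]
  obtain ⟨a, b, hab, ha, hb⟩ :
      ∃ a b, ((p : ℤ) : EisensteinInt) = a * b ∧ ¬ IsUnit a ∧ ¬ IsUnit b := by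
    by_contra! hcon
    exact h (irreducible_iff_prime.mp
      ⟨hunit, fun a b hab => or_iff_not_imp_left.mpr (hcon a b hab)⟩)
  rw [isUnit_iff_norm_eq_one] at ha hb
  have hnorm : a.norm * b.norm = (p : ℤ) ^ 2 := by rw [← map_mul, ← hab, norm_intCast]
  lift a.norm to ℕ using norm_nonneg a with A hA
  lift b.norm to ℕ using norm_nonneg b with B hB
  norm_cast at ha hb hnorm
  exact ⟨a, by rw [← hA, ((hp.mul_eq_prime_sq_iff ha hb).mp hnorm).1]⟩

theorem prime_intCast_of_mod_three_eq_two {p : ℕ} (hp : p.Prime) (hp3 : p % 3 = 2) :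
    Prime ((p : ℤ) : EisensteinInt) := by
  by_contra h
  obtain ⟨z, hz⟩ := exists_norm_eq_of_not_prime hp h
  exact norm_emod_three_ne_two z (by omega)

theorem exists_dvd_sq_add_add_one {p : ℕ} (hp : p.Prime) (hp3 : p % 3 = 1) :
    ∃ u : ℤ, (p : ℤ) ∣ u ^ 2 + u + 1 := by
  have := Fact.mk hp
  obtain ⟨g, hg⟩ :=
    exists_prime_orderOf_dvd_card 3 (G := (ZMod p)ˣ) (by rw [ZMod.card_units]; omega)
  have hg1 : (g : ZMod p) ≠ 1 := by
    rw [Ne, Units.val_eq_one, ← orderOf_eq_one_iff, hg]; norm_num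
  have hg3 : (g : ZMod p) ^ 3 = 1 := by
    rw [← Units.val_pow_eq_pow_val, ← hg, pow_orderOf_eq_one, Units.val_one]
  have hroot : (g : ZMod p) ^ 2 + g + 1 = 0 :=
    mul_left_cancel₀ (sub_ne_zero.mpr hg1) (by linear_combination hg3)
  refine ⟨(g : ZMod p).val, (ZMod.intCast_zmod_eq_zero_iff_dvd _ p).mp ?_⟩
  push_cast
  rwa [ZMod.natCast_zmod_val]

-- `p` divides the norm `u² + u + 1` of `⟨u, 1⟩` but neither it nor its conjugate.
theorem not_prime_intCast_of_mod_three_eq_one {p : ℕ} (hp : p.Prime) (hp3 : p % 3 = 1) :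
    ¬ Prime ((p : ℤ) : EisensteinInt) := by
  intro h
  obtain ⟨u, hu⟩ := exists_dvd_sq_add_add_one hp hp3
  have hp1 : ¬ (p : ℤ) ∣ 1 := by exact_mod_cast hp.not_dvd_one
  have hnorm : (⟨u, 1⟩ : EisensteinInt).norm = u ^ 2 + u + 1 := by rw [norm_eq]; ring
  rcases dvd_or_star_dvd h dvd_rfl (hnorm ▸ hu) with hdvd | hdvd
  · exact hp1 (intCast_dvd_iff.mp hdvd).2
  · have := star_intCast (R := EisensteinInt) p ▸ star_dvd_star hdvd
    exact hp1 (dvd_neg.mp (intCast_dvd_iff.mp this).2)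

-- `π ∣ star π` makes `p` divide the trace `2 re + im`, hence `im`, and then `p ^ 2 ∣ 4 p`.
theorem not_dvd_star_of_norm_eq {π : EisensteinInt} {p : ℕ} (hp : p.Prime) (hp3 : p % 3 = 1)
    (hπ : π.norm = p) : ¬ π ∣ star π := by
  intro h
  have hP : Prime (p : ℤ) := Nat.prime_iff_prime_int.mp hp
  have h4 := four_mul_norm π
  rw [hπ] at h4
  have htrace : π ∣ ((2 * π.re + π.im : ℤ) : EisensteinInt) := by
    have : ((2 * π.re + π.im : ℤ) : EisensteinInt) = π + star π := by ext <;> simp; ring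
    exact this ▸ dvd_add dvd_rfl h
  obtain ⟨c, hc⟩ : (p : ℤ) ∣ 2 * π.re + π.im :=
    hP.dvd_of_dvd_pow (n := 2) (hπ ▸ norm_intCast _ ▸ map_dvd QuadraticAlgebra.norm htrace)
  obtain ⟨d, hd⟩ : (p : ℤ) ∣ π.im := by
    have h3b : (p : ℤ) ∣ 3 * π.im ^ 2 :=
      ⟨4 - p * c ^ 2, by linear_combination -h4 - (2 * π.re + π.im + p * c) * hc⟩
    rcases hP.dvd_or_dvd h3b with h3 | hb
    · have : p = 3 := (Nat.prime_dvd_prime_iff_eq hp Nat.prime_three).mp (by exact_mod_cast h3)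
      omega
    · exact hP.dvd_of_dvd_pow hb
  have hp4 : p ∣ 4 := by
    have hp0 : (p : ℤ) ≠ 0 := by exact_mod_cast hp.ne_zero
    have : (p : ℤ) * (p * (c ^ 2 + 3 * d ^ 2)) = p * 4 := by
      linear_combination -h4 - (2 * π.re + π.im + p * c) * hc - 3 * (π.im + p * d) * hd
    exact_mod_cast Dvd.intro _ (mul_left_cancel₀ hp0 this)
  have := Nat.le_of_dvd (by norm_num) hp4
  interval_cases p <;> first | omega | norm_num at hp

theorem reprCount_prime_pow_mul {p m : ℕ} (hp : p.Prime) (hpm : ¬ p ∣ m) (v : ℕ) :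
    (reprCount ((p ^ v * m : ℕ) : ℤ) : ℤ) = divisorSumChi3 (p ^ v) * reprCount m := by
  rw [divisorSumChi3_prime_pow hp]
  push_cast
  have hpm' : ¬ (p : ℤ) ∣ m := by exact_mod_cast hpm
  rcases (by omega : p % 3 = 0 ∨ p % 3 = 1 ∨ p % 3 = 2) with h3 | h3 | h3
  · obtain rfl : p = 3 :=
      ((Nat.prime_dvd_prime_iff_eq Nat.prime_three hp).mp (Nat.dvd_of_mod_eq_zero h3)).symm
    simp [chi3_apply, reprCount_three_pow_mul, Finset.sum_range_succ']
  · obtain ⟨π, hπ⟩ :=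
      exists_norm_eq_of_not_prime hp (not_prime_intCast_of_mod_three_eq_one hp h3)
    have := reprCount_pow_mul_of_split
      (prime_of_prime_norm (hπ ▸ Nat.prime_iff_prime_int.mp hp))
      (not_dvd_star_of_norm_eq hp h3 hπ) (hπ ▸ hpm') v
    rw [hπ] at this
    simp [chi3_apply, h3, this]
  · have hchi : chi3 p = -1 := by rw [chi3_apply, if_neg (by omega), if_pos h3]
    rw [reprCount_pow_mul_of_prime (prime_intCast_of_mod_three_eq_two hp h3) hpm', hchi,
      neg_one_geom_sum]
    by_cases hv : Even v <;> simp [hv, Nat.even_add_one]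

theorem reprCount_eq_six_mul_divisorSumChi3 (n : ℕ) (hn : 0 < n) :
    (reprCount n : ℤ) = 6 * divisorSumChi3 n := by
  induction n using Nat.recOnPrimePow with
  | zero => omega
  | one => simp [reprCount_one, isMultiplicative_divisorSumChi3.map_one]
  | prime_pow_mul a p v hp hpa _ ih =>
    have ha : 0 < a := Nat.pos_of_ne_zero (by rintro rfl; exact hpa (dvd_zero p))
    rw [reprCount_prime_pow_mul hp hpa, ih ha, isMultiplicative_divisorSumChi3.map_mul_of_coprime
      ((hp.coprime_iff_not_dvd.mpr hpa).pow_left v)]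
    ring

end EisensteinInt

/-- The number of representations of `n ≥ 1` as `x² + xy + y²` with `(x,y) ∈ ℤ²` equals
`6·(#{d ∣ n, d ≡ 1 mod 3} - #{d ∣ n, d ≡ 2 mod 3})`. -/
theorem stmt_3 (n : ℕ) (hn : 0 < n) :
    (Nat.card {p : ℤ × ℤ // p.1 ^ 2 + p.1 * p.2 + p.2 ^ 2 = n} : ℤ) =
      6 * (((n.divisors.filter fun d => d % 3 = 1).card : ℤ)
            - ((n.divisors.filter fun d => d % 3 = 2).card : ℤ)) := by
  rw [EisensteinInt.natCard_eq_reprCount, EisensteinInt.reprCount_eq_six_mul_divisorSumChi3 n hn,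
    divisorSumChi3_eq_card_sub_card]
end

section
/- For every complex number q with |q| < 1, the Borwein theta functions satisfy a₀(q)³ = b₀(q)³ + c₀(q)³. -/
/-!
Cube the three series: each cube is a sum over triples `z ∈ (ℤ²)³` of `q` to the power
`Q(z₁) + Q(z₂) + Q(z₃)`, where `Q(m, n) = m² + mn + n²` is the norm of `m - nω` in `ℤ[ω]`.
Sorting the triples by the residue `r` of `∑ (mᵢ - nᵢ)` mod 3 gives sums `S r` with
`a₀³ = S 0 + S 1 + S 2` and `b₀³ = S 0 + ω S 1 + ω² S 2`, and `S 1 = S 2` by swapping `m` and `n`.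
On the other side `c₀³ = q ∑ q^(K(z₁) + K(z₂) + K(z₃))` with `K(m, n) = Q(m + ⅓, n + ⅓) - ⅓`.
Multiplication by `ω` around the centre `(-⅓, -⅓)` preserves `K` and shifts the residue by one,
so the three residue classes contribute equally, and a discrete Fourier transform over `ℤ[ω]`
matches the residue-0 class with `S 1`. Hence `c₀³ = 3 S 1 = a₀³ - b₀³`, as `1 + ω + ω² = 0`.
-/

open Complex

noncomputable def omega : ℂ := Complex.exp (2 * Real.pi * Complex.I / 3)

/-- Borwein theta function `a₀(q) = ∑_{m,n ∈ ℤ} q^{m²+mn+n²}`. -/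
noncomputable def a0 (q : ℂ) : ℂ :=
  ∑' p : ℤ × ℤ, q ^ (p.1 ^ 2 + p.1 * p.2 + p.2 ^ 2)

/-- Borwein theta function `b₀(q) = ∑_{m,n ∈ ℤ} ω^{m-n} q^{m²+mn+n²}`. -/
noncomputable def b0 (q : ℂ) : ℂ :=
  ∑' p : ℤ × ℤ, omega ^ (p.1 - p.2) * q ^ (p.1 ^ 2 + p.1 * p.2 + p.2 ^ 2)

/-- Borwein theta function
`c₀(q) = ∑_{m,n ∈ ℤ} q^{(m+1/3)²+(m+1/3)(n+1/3)+(n+1/3)²}` (principal powers). -/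
noncomputable def c0 (q : ℂ) : ℂ :=
  ∑' p : ℤ × ℤ, q ^ ((((p.1 : ℂ) + 1 / 3) ^ 2 + ((p.1 : ℂ) + 1 / 3) * ((p.2 : ℂ) + 1 / 3)
      + ((p.2 : ℂ) + 1 / 3) ^ 2 : ℂ))

namespace Borwein

lemma summable_pow_of_natAbs_add_natAbs_le {r : ℝ} (hr₀ : 0 ≤ r) (hr₁ : r < 1)
    {E : ℤ × ℤ → ℕ} (hE : ∀ p, p.1.natAbs + p.2.natAbs ≤ E p + 1) :
    Summable fun p => r ^ E p := by
  -- compare with a positive ratio `ρ ≥ r`, so that the offset `+ 1` can be divided out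
  set ρ := max r (1 / 2)
  have hρ₀ : 0 < ρ := lt_max_of_lt_right one_half_pos
  have hρ₁ : ρ < 1 := max_lt hr₁ one_half_lt_one
  have hgeom : Summable fun m : ℤ => ρ ^ m.natAbs := by
    apply Summable.of_nat_of_neg <;> simpa using summable_geometric_of_lt_one hρ₀.le hρ₁
  have hsucc : Summable fun p => ρ ^ (E p + 1) := by
    refine (hgeom.mul_of_nonneg hgeom (fun _ => by positivity) fun _ => by positivity)
      |>.of_nonneg_of_le (fun _ => by positivity) fun p => ?_
    rw [← pow_add]
    exact pow_le_pow_of_le_one hρ₀.le hρ₁.le (hE p)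
  refine ((summable_mul_left_iff hρ₀.ne').mp (by simpa [pow_succ'] using hsucc)).of_nonneg_of_le
    (fun _ => by positivity) fun p => pow_le_pow_left₀ hr₀ (le_max_left _ _) _

lemma hasSum_triple_mul_of_summable_norm {R α : Type*} [NormedCommRing R] [CompleteSpace R]
    {f : α → R} (hf : Summable fun a => ‖f a‖) :
    HasSum (fun z : α × α × α => f z.1 * f z.2.1 * f z.2.2) ((∑' a, f a) ^ 3) := by
  have hpair := hf.mul_norm hf
  rw [pow_three, tsum_mul_tsum_of_summable_norm hf hf, tsum_mul_tsum_of_summable_norm hf hpair]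
  simpa only [mul_assoc] using (summable_mul_of_summable_norm hf hpair).hasSum

lemma cpow_natCast_add_one_third (q : ℂ) (n : ℕ) :
    q ^ ((n : ℂ) + 1 / 3) = q ^ n * q ^ (1 / 3 : ℂ) := by
  rcases eq_or_ne q 0 with rfl | hq
  · have hre : ((n : ℂ) + 1 / 3).re ≠ 0 := by norm_num; positivity
    rw [zero_cpow (ne_of_apply_ne re hre), zero_cpow (by norm_num), mul_zero]
  · rw [cpow_add _ _ hq, cpow_natCast]

lemma isPrimitiveRoot_omega : IsPrimitiveRoot omega 3 := by
  simpa [omega] using Complex.isPrimitiveRoot_exp 3 (by norm_num)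

lemma one_add_omega_add_omega_sq : 1 + omega + omega ^ 2 = 0 := by
  simpa [Finset.sum_range_succ] using isPrimitiveRoot_omega.geom_sum_eq_zero (by norm_num)

lemma omega_zpow_three_mul_add (k r : ℤ) : omega ^ (3 * k + r) = omega ^ r := by
  rw [zpow_add₀ (isPrimitiveRoot_omega.ne_zero (by norm_num)), zpow_mul, zpow_ofNat,
    isPrimitiveRoot_omega.pow_eq_one, one_zpow, one_mul]

abbrev Triple : Type := (ℤ × ℤ) × (ℤ × ℤ) × (ℤ × ℤ)

def tripleSum {M : Type*} [AddCommMonoid M] (g : ℤ × ℤ → M) (z : Triple) : M :=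
  g z.1 + g z.2.1 + g z.2.2

def eisNorm (p : ℤ × ℤ) : ℕ := (p.1 ^ 2 + p.1 * p.2 + p.2 ^ 2).toNat

-- `shiftedNorm (m, n) = eisNorm (m + ⅓, n + ⅓) - ⅓`, the exponent in `c₀` up to `⅓`
def shiftedNorm (p : ℤ × ℤ) : ℕ := (p.1 ^ 2 + p.1 * p.2 + p.2 ^ 2 + p.1 + p.2).toNat

lemma natCast_eisNorm (p : ℤ × ℤ) : (eisNorm p : ℤ) = p.1 ^ 2 + p.1 * p.2 + p.2 ^ 2 :=
  Int.toNat_of_nonneg (by nlinarith [sq_nonneg (p.1 + p.2), sq_nonneg p.1, sq_nonneg p.2])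

lemma natCast_shiftedNorm (p : ℤ × ℤ) :
    (shiftedNorm p : ℤ) = p.1 ^ 2 + p.1 * p.2 + p.2 ^ 2 + p.1 + p.2 :=
  Int.toNat_of_nonneg (by nlinarith [sq_nonneg (p.1 + p.2 + 1), sq_nonneg p.1, sq_nonneg p.2])

lemma natAbs_add_natAbs_le_eisNorm (p : ℤ × ℤ) : p.1.natAbs + p.2.natAbs ≤ eisNorm p + 1 := by
  zify
  rw [natCast_eisNorm]
  obtain ⟨m, n⟩ := p
  rcases abs_cases m with ⟨hm, _⟩ | ⟨hm, _⟩ <;> rcases abs_cases n with ⟨hn, _⟩ | ⟨hn, _⟩ <;>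
    rw [hm, hn] <;>
    nlinarith [sq_nonneg (m - 1), sq_nonneg (n - 1), sq_nonneg (m + 1), sq_nonneg (n + 1)]

lemma natAbs_add_natAbs_le_shiftedNorm (p : ℤ × ℤ) :
    p.1.natAbs + p.2.natAbs ≤ shiftedNorm p + 1 := by
  zify
  rw [natCast_shiftedNorm]
  obtain ⟨m, n⟩ := p
  rcases abs_cases m with ⟨hm, _⟩ | ⟨hm, _⟩ <;> rcases abs_cases n with ⟨hn, _⟩ | ⟨hn, _⟩ <;>
    rw [hm, hn] <;>
    nlinarith [sq_nonneg (m - 1), sq_nonneg (n - 1), sq_nonneg (m + 1), sq_nonneg (n + 1),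
      sq_nonneg (m + n)]

lemma eisNorm_swap (p : ℤ × ℤ) : eisNorm p.swap = eisNorm p := by
  zify
  simp only [natCast_eisNorm, Prod.fst_swap, Prod.snd_swap]
  ring

def rotate (p : ℤ × ℤ) : ℤ × ℤ := (p.2, -p.1 - p.2 - 1)

lemma shiftedNorm_rotate (p : ℤ × ℤ) : shiftedNorm (rotate p) = shiftedNorm p := by
  zify
  simp only [natCast_shiftedNorm, rotate]
  ring

abbrev Param : Type := ℤ × ℤ × ℤ × ℤ × ℤ × ℤ

-- coordinates `(k, n₁, m₂, n₂, m₃, n₃)` on the triples with `∑ (mᵢ - nᵢ) = 3k + r`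
def classParam (r : ℤ) : Param → Triple := fun (k, n₁, m₂, n₂, m₃, n₃) =>
  ((3 * k + r + n₁ - m₂ + n₂ - m₃ + n₃, n₁), (m₂, n₂), (m₃, n₃))

lemma tripleSum_sub_classParam (r : ℤ) (x : Param) :
    tripleSum (fun p => p.1 - p.2) (classParam r x) = 3 * x.1 + r := by
  simp only [tripleSum, classParam]
  ring

def classParamEquiv : Fin 3 × Param ≃ Triple where
  toFun x := classParam x.1 x.2
  invFun z := (⟨(tripleSum (fun p => p.1 - p.2) z % 3).toNat, by omega⟩,
    (tripleSum (fun p => p.1 - p.2) z / 3, z.1.2, z.2.1.1, z.2.1.2, z.2.2.1, z.2.2.2))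
  left_inv := by
    rintro ⟨⟨r, hr⟩, k, n₁, m₂, n₂, m₃, n₃⟩
    simp only [classParam, tripleSum, Prod.mk.injEq, Fin.mk.injEq, and_true]
    omega
  right_inv := by
    rintro ⟨⟨m₁, n₁⟩, ⟨m₂, n₂⟩, m₃, n₃⟩
    simp only [classParam, tripleSum, Prod.mk.injEq, and_true]
    omega

lemma tsum_eq_sum_classParam {α : Type*} [AddCommGroup α] [UniformSpace α] [IsUniformAddGroup α]
    [CompleteSpace α] [T0Space α] {f : Triple → α} (hf : Summable f) :
    ∑' z, f z = ∑' x, f (classParam 0 x) + ∑' x, f (classParam 1 x)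
      + ∑' x, f (classParam 2 x) := by
  rw [← classParamEquiv.tsum_eq, Summable.tsum_prod (f := fun x => f (classParamEquiv x))
    (classParamEquiv.summable_iff.mpr hf), tsum_fintype, Fin.sum_univ_three]
  rfl

def swapParam : Param ≃ Param where
  toFun := fun (k, n₁, m₂, n₂, m₃, n₃) =>
    (-1 - k, 3 * k + 1 + n₁ - m₂ + n₂ - m₃ + n₃, n₂, m₂, n₃, m₃)
  invFun := fun (k, n₁, m₂, n₂, m₃, n₃) =>
    (-1 - k, n₁ + 3 * k + 2 + n₂ - m₂ + n₃ - m₃, n₂, m₂, n₃, m₃)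
  left_inv := by
    rintro ⟨k, n₁, m₂, n₂, m₃, n₃⟩
    dsimp only
    simp only [Prod.mk.injEq, and_true]
    omega
  right_inv := by
    rintro ⟨k, n₁, m₂, n₂, m₃, n₃⟩
    dsimp only
    simp only [Prod.mk.injEq, and_true]
    omega

lemma classParam_two_swapParam (x : Param) :
    classParam 2 (swapParam x)
      = Prod.map Prod.swap (Prod.map Prod.swap Prod.swap) (classParam 1 x) := by
  obtain ⟨k, n₁, m₂, n₂, m₃, n₃⟩ := x
  simp only [classParam, swapParam, Equiv.coe_fn_mk, Prod.map, Prod.swap, Prod.mk.injEq, and_true]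
  ring

def rotateParam (r : ℤ) : Param ≃ Param where
  toFun := fun (k, n₁, m₂, n₂, m₃, n₃) =>
    (k + n₁, -(3 * k + r + n₁ - m₂ + n₂ - m₃ + n₃) - n₁ - 1, m₂, n₂, m₃, n₃)
  invFun := fun (k, n₁, m₂, n₂, m₃, n₃) =>
    (k - (3 * k + r + 1 + n₁ - m₂ + n₂ - m₃ + n₃), 3 * k + r + 1 + n₁ - m₂ + n₂ - m₃ + n₃,
      m₂, n₂, m₃, n₃)
  left_inv := by
    rintro ⟨k, n₁, m₂, n₂, m₃, n₃⟩
    dsimp only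
    simp only [Prod.mk.injEq, and_true]
    omega
  right_inv := by
    rintro ⟨k, n₁, m₂, n₂, m₃, n₃⟩
    dsimp only
    simp only [Prod.mk.injEq, and_true]
    omega

lemma classParam_add_one_rotateParam (r : ℤ) (x : Param) :
    classParam (r + 1) (rotateParam r x) = Prod.map rotate id (classParam r x) := by
  obtain ⟨k, n₁, m₂, n₂, m₃, n₃⟩ := x
  simp only [classParam, rotateParam, rotate, Equiv.coe_fn_mk, Prod.map, id, Prod.mk.injEq,
    and_true]
  ring

lemma tsum_classParam_add_one {α : Type*} [AddCommMonoid α] [TopologicalSpace α] {f : ℕ → α}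
    (r : ℤ) : ∑' x, f (tripleSum shiftedNorm (classParam (r + 1) x))
      = ∑' x, f (tripleSum shiftedNorm (classParam r x)) := by
  rw [← (rotateParam r).tsum_eq]
  simp only [classParam_add_one_rotateParam, tripleSum, Prod.map_fst, Prod.map_snd, id,
    shiftedNorm_rotate]

/- In Eisenstein coordinates `(m, n) ↦ m - nω`, with `λ = 1 - ω` and `c = λ / 3`, this is
`z ↦ F (z + c) / λ` for the Fourier matrix `F = (ω^(-ij))`. As `F / λ` is unitary, it carries
`∑ N(zᵢ + c) = 1 + ∑ shiftedNorm zᵢ` to `∑ eisNorm`; the image is integral because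
`z₁ + z₂ + z₃ ≡ 0 mod λ` on the residue class `0`. -/
def fourierParam : Param ≃ Param where
  toFun := fun (k, n₁, m₂, n₂, m₃, n₃) =>
    (3 * k + n₁ - m₂ + n₂ - m₃ + n₃, -k, 2 * k + n₁ - m₂ - m₃ + n₃, -k + m₂ - n₃,
      2 * k + n₁ - m₂ + n₂ - m₃, -k - n₂ + m₃)
  invFun := fun (k, n₁, m₂, n₂, m₃, n₃) =>
    (-n₁, k + n₁ + n₂ + n₃, k + n₂ - m₃, k + n₁ - m₂, k + n₃ - m₂, k + n₁ - m₃)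
  left_inv := by
    rintro ⟨k, n₁, m₂, n₂, m₃, n₃⟩
    dsimp only
    simp only [Prod.mk.injEq]
    omega
  right_inv := by
    rintro ⟨k, n₁, m₂, n₂, m₃, n₃⟩
    dsimp only
    simp only [Prod.mk.injEq]
    omega

lemma tripleSum_eisNorm_fourierParam (x : Param) :
    tripleSum eisNorm (classParam 1 (fourierParam x))
      = 1 + tripleSum shiftedNorm (classParam 0 x) := by
  obtain ⟨k, n₁, m₂, n₂, m₃, n₃⟩ := x
  zify
  simp only [tripleSum, classParam, fourierParam, Equiv.coe_fn_mk]
  push_cast [natCast_shiftedNorm, natCast_eisNorm]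
  ring

lemma a0_eq_tsum (q : ℂ) : a0 q = ∑' p, q ^ eisNorm p := by
  refine tsum_congr fun p => ?_
  rw [← zpow_natCast, natCast_eisNorm]

lemma b0_eq_tsum (q : ℂ) : b0 q = ∑' p, omega ^ (p.1 - p.2) * q ^ eisNorm p := by
  refine tsum_congr fun p => ?_
  rw [← zpow_natCast q, natCast_eisNorm]

lemma c0_eq_mul_tsum (q : ℂ) : c0 q = q ^ (1 / 3 : ℂ) * ∑' p, q ^ shiftedNorm p := by
  rw [c0, ← tsum_mul_left]
  refine tsum_congr fun p => ?_
  have hexp : (((p.1 : ℂ) + 1 / 3) ^ 2 + ((p.1 : ℂ) + 1 / 3) * ((p.2 : ℂ) + 1 / 3)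
      + ((p.2 : ℂ) + 1 / 3) ^ 2 : ℂ) = ((shiftedNorm p : ℕ) : ℂ) + 1 / 3 := by
    rw [← Int.cast_natCast, natCast_shiftedNorm]
    push_cast
    ring
  rw [hexp, cpow_natCast_add_one_third, mul_comm]

lemma summable_norm_pow_of_natAbs_add_natAbs_le {q : ℂ} (hq : ‖q‖ < 1) {E : ℤ × ℤ → ℕ}
    (hE : ∀ p, p.1.natAbs + p.2.natAbs ≤ E p + 1) : Summable fun p => ‖q ^ E p‖ := by
  simpa only [norm_pow] using summable_pow_of_natAbs_add_natAbs_le (norm_nonneg q) hq hE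

noncomputable def classSum (q : ℂ) (r : ℤ) : ℂ := ∑' x, q ^ tripleSum eisNorm (classParam r x)

lemma hasSum_pow_tripleSum_eisNorm {q : ℂ} (hq : ‖q‖ < 1) :
    HasSum (fun z => q ^ tripleSum eisNorm z) (a0 q ^ 3) := by
  rw [a0_eq_tsum]
  simpa only [tripleSum, pow_add] using hasSum_triple_mul_of_summable_norm
    (summable_norm_pow_of_natAbs_add_natAbs_le hq natAbs_add_natAbs_le_eisNorm)

lemma a0_pow_three {q : ℂ} (hq : ‖q‖ < 1) :
    a0 q ^ 3 = classSum q 0 + classSum q 1 + classSum q 2 := by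
  have h := hasSum_pow_tripleSum_eisNorm hq
  rw [← h.tsum_eq, tsum_eq_sum_classParam h.summable]
  rfl

lemma b0_pow_three {q : ℂ} (hq : ‖q‖ < 1) :
    b0 q ^ 3 = classSum q 0 + omega * classSum q 1 + omega ^ 2 * classSum q 2 := by
  have hω : omega ≠ 0 := isPrimitiveRoot_omega.ne_zero (by norm_num)
  have hsum : Summable fun p : ℤ × ℤ => ‖omega ^ (p.1 - p.2) * q ^ eisNorm p‖ := by
    simpa only [norm_mul, norm_zpow, isPrimitiveRoot_omega.norm'_eq_one (by norm_num), one_zpow,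
      one_mul] using summable_norm_pow_of_natAbs_add_natAbs_le hq natAbs_add_natAbs_le_eisNorm
  have h : HasSum (fun z => omega ^ tripleSum (fun p => p.1 - p.2) z * q ^ tripleSum eisNorm z)
      (b0 q ^ 3) := by
    rw [b0_eq_tsum]
    refine (hasSum_triple_mul_of_summable_norm hsum).congr_fun fun z => ?_
    simp only [tripleSum, zpow_add₀ hω, pow_add]
    ring
  rw [← h.tsum_eq, tsum_eq_sum_classParam h.summable]
  simp only [tripleSum_sub_classParam, omega_zpow_three_mul_add, tsum_mul_left, classSum]
  norm_num

lemma classSum_two (q : ℂ) : classSum q 2 = classSum q 1 := by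
  rw [classSum, ← swapParam.tsum_eq]
  simp only [classParam_two_swapParam, tripleSum, Prod.map_fst, Prod.map_snd, eisNorm_swap]
  rfl

lemma hasSum_pow_one_add_tripleSum_shiftedNorm {q : ℂ} (hq : ‖q‖ < 1) :
    HasSum (fun z => q ^ (1 + tripleSum shiftedNorm z)) (c0 q ^ 3) := by
  have hcube : (q ^ (1 / 3 : ℂ)) ^ 3 = q := by rw [one_div, cpow_ofNat_inv_pow]
  rw [c0_eq_mul_tsum, mul_pow, hcube]
  simpa only [tripleSum, pow_add, pow_one] using (hasSum_triple_mul_of_summable_norm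
    (summable_norm_pow_of_natAbs_add_natAbs_le hq natAbs_add_natAbs_le_shiftedNorm)).mul_left q

lemma c0_pow_three {q : ℂ} (hq : ‖q‖ < 1) : c0 q ^ 3 = 3 * classSum q 1 := by
  have h := hasSum_pow_one_add_tripleSum_shiftedNorm hq
  have h₁ := tsum_classParam_add_one (f := fun n => q ^ (1 + n)) 0
  have h₂ := tsum_classParam_add_one (f := fun n => q ^ (1 + n)) 1
  norm_num at h₁ h₂
  have h₀ : ∑' x, q ^ (1 + tripleSum shiftedNorm (classParam 0 x)) = classSum q 1 := by
    simp only [classSum, ← tripleSum_eisNorm_fourierParam,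
      fourierParam.tsum_eq fun y => q ^ tripleSum eisNorm (classParam 1 y)]
  rw [← h.tsum_eq, tsum_eq_sum_classParam h.summable, h₂, h₁, h₀]
  ring

end Borwein

open Borwein in
/-- The Borweins' cubic identity `a₀(q)³ = b₀(q)³ + c₀(q)³` for `|q| < 1`. -/
theorem stmt_8 (q : ℂ) (hq : ‖q‖ < 1) :
    a0 q ^ 3 = b0 q ^ 3 + c0 q ^ 3 := by
  rw [a0_pow_three hq, b0_pow_three hq, c0_pow_three hq, classSum_two]
  linear_combination (-classSum q 1) * one_add_omega_add_omega_sq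
end

section
/- For every complex q with |q| < 1, b₀(q) = (3·a₀(q³) - a₀(q))/2, where ω = exp(2πi/3), a₀(q) = ∑_{m,n ∈ ℤ} q^{m²+mn+n²} and b₀(q) = ∑_{m,n ∈ ℤ} ω^{m-n} q^{m²+mn+n²}. -/
set_option maxHeartbeats 1000000 in
lemma summable_norm_aux (q : ℂ) (hq : ‖q‖ < 1) :
    Summable (fun p : ℤ × ℤ => ‖q ^ (p.1 ^ 2 + p.1 * p.2 + p.2 ^ 2)‖) := by
  by_cases h0 : q = 0
  · subst h0
    apply summable_of_ne_finset_zero (s := {((0:ℤ),(0:ℤ))})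
    intro p hp
    have hne : p.1 ^ 2 + p.1 * p.2 + p.2 ^ 2 ≠ 0 := by
      intro h
      apply hp
      simp only [Finset.mem_singleton]
      have h1 : p.1 = 0 ∧ p.2 = 0 := by
        constructor <;> nlinarith [sq_nonneg (p.1 + p.2), sq_nonneg p.1, sq_nonneg p.2]
      exact Prod.ext h1.1 h1.2
    rw [zero_zpow _ hne]
    simp
  · set r := ‖q‖ with hr
    have hr0 : 0 < r := norm_pos_iff.mpr h0
    have hgeo : Summable (fun n : ℕ => r ^ n) := summable_geometric_of_lt_one hr0.le hq
    have hint : Summable (fun m : ℤ => r ^ m.natAbs) := by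
      apply Summable.of_nat_of_neg <;> simpa using hgeo
    have hnn : (0 : ℤ → ℝ) ≤ fun m : ℤ => r ^ m.natAbs := fun m => by positivity
    have hprod : Summable (fun p : ℤ × ℤ => r ^ p.1.natAbs * r ^ p.2.natAbs) :=
      hint.mul_of_nonneg hint hnn hnn
    have hle : ∀ p : ℤ × ℤ, ‖q ^ (p.1 ^ 2 + p.1 * p.2 + p.2 ^ 2)‖ ≤
        r⁻¹ * (r ^ p.1.natAbs * r ^ p.2.natAbs) := by
      intro ⟨m, n⟩
      have hexp : (m.natAbs : ℤ) + n.natAbs - 1 ≤ m ^ 2 + m * n + n ^ 2 := by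
        have h1 : (m.natAbs : ℤ) = |m| := Int.natCast_natAbs m
        have h2 : (n.natAbs : ℤ) = |n| := Int.natCast_natAbs n
        rw [h1, h2]
        nlinarith [sq_nonneg (m + n), sq_nonneg (|m| - 1), sq_nonneg (|n| - 1), sq_abs m, sq_abs n]
      calc ‖q ^ (m ^ 2 + m * n + n ^ 2)‖ = r ^ (m ^ 2 + m * n + n ^ 2) := norm_zpow q _
        _ ≤ r ^ ((m.natAbs : ℤ) + n.natAbs - 1) :=
            zpow_le_zpow_right_of_le_one₀ hr0 hq.le hexp
        _ = r⁻¹ * (r ^ m.natAbs * r ^ n.natAbs) := by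
            rw [zpow_sub₀ hr0.ne', zpow_add₀ hr0.ne']
            simp only [zpow_natCast, zpow_one]
            ring
    exact Summable.of_nonneg_of_le (fun p => norm_nonneg _) hle (hprod.mul_left _)

lemma omega_ne_zero : omega ≠ 0 := Complex.exp_ne_zero _

lemma omega_eq : omega = Complex.exp (((2 * Real.pi / 3 : ℝ) : ℂ) * Complex.I) := by
  rw [omega]; congr 1; push_cast; ring

lemma omega_pow_three : omega ^ (3 : ℕ) = 1 := by
  rw [omega, ← Complex.exp_nat_mul,
    show ((3 : ℕ) : ℂ) * (2 * Real.pi * Complex.I / 3) = 2 * Real.pi * Complex.I by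
      push_cast; ring,
    Complex.exp_two_pi_mul_I]

lemma omega_ne_one : omega ≠ 1 := by
  intro h
  have him : omega.im = Real.sin (2 * Real.pi / 3) := by
    rw [omega_eq, Complex.exp_ofReal_mul_I_im]
  have hpos : 0 < Real.sin (2 * Real.pi / 3) := by
    apply Real.sin_pos_of_pos_of_lt_pi <;> nlinarith [Real.pi_pos]
  rw [h] at him
  simp at him
  linarith [him ▸ hpos]

lemma omega_quad : omega ^ 2 + omega + 1 = 0 := by
  have h : (omega - 1) * (omega ^ 2 + omega + 1) = 0 := by
    have := omega_pow_three
    linear_combination this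
  rcases mul_eq_zero.mp h with h1 | h2
  · exact absurd (sub_eq_zero.mp h1) omega_ne_one
  · exact h2

lemma norm_omega : ‖omega‖ = 1 := by
  rw [omega_eq]
  exact Complex.norm_exp_ofReal_mul_I _

lemma omega_zpow_three : omega ^ (3 : ℤ) = 1 := by
  rw [show (3 : ℤ) = ((3 : ℕ) : ℤ) by norm_num, zpow_natCast]
  exact omega_pow_three

lemma omega_zpow_mod (k : ℤ) : omega ^ k = omega ^ (k % 3) := by
  conv_lhs => rw [show k = 3 * (k / 3) + k % 3 from (Int.mul_ediv_add_emod k 3).symm]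
  rw [zpow_add₀ omega_ne_zero, zpow_mul, omega_zpow_three, one_zpow, one_mul]

lemma omega_zpow_two : omega ^ (2 : ℤ) = omega ^ (2 : ℕ) := by
  rw [show (2 : ℤ) = ((2 : ℕ) : ℤ) from rfl, zpow_natCast]

lemma omega_key (j : ℤ) : omega ^ j + omega ^ (-j) = if (3 : ℤ) ∣ j then 2 else -1 := by
  have h0 : 0 ≤ j % 3 := Int.emod_nonneg j (by norm_num)
  have h3 : j % 3 < 3 := Int.emod_lt_of_pos j (by norm_num)
  rw [omega_zpow_mod j, omega_zpow_mod (-j)]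
  have hdvd : (3 : ℤ) ∣ j ↔ j % 3 = 0 := Int.dvd_iff_emod_eq_zero
  interval_cases h : j % 3
  · have h' : (-j) % 3 = 0 := by omega
    rw [h', if_pos (hdvd.mpr rfl)]
    norm_num
  · have h' : (-j) % 3 = 2 := by omega
    rw [h', if_neg (fun hd => absurd (hdvd.mp hd) (by norm_num))]
    rw [zpow_one, omega_zpow_two]
    linear_combination omega_quad
  · have h' : (-j) % 3 = 1 := by omega
    rw [h', if_neg (fun hd => absurd (hdvd.mp hd) (by norm_num))]
    rw [zpow_one, omega_zpow_two]
    linear_combination omega_quad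

/-- The Borwein relation `b₀(q) = (3a₀(q³) - a₀(q))/2` for `|q| < 1`. -/
theorem stmt_18 (q : ℂ) (hq : ‖q‖ < 1) :
    b0 q = (3 * a0 (q ^ 3) - a0 q) / 2 := by
  have hFnorm := summable_norm_aux q hq
  have hF : Summable (fun p : ℤ × ℤ => q ^ (p.1 ^ 2 + p.1 * p.2 + p.2 ^ 2)) := hFnorm.of_norm
  have hB : Summable (fun p : ℤ × ℤ =>
      omega ^ (p.1 - p.2) * q ^ (p.1 ^ 2 + p.1 * p.2 + p.2 ^ 2)) := by
    apply Summable.of_norm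
    have he : (fun p : ℤ × ℤ => ‖omega ^ (p.1 - p.2) * q ^ (p.1 ^ 2 + p.1 * p.2 + p.2 ^ 2)‖)
        = fun p : ℤ × ℤ => ‖q ^ (p.1 ^ 2 + p.1 * p.2 + p.2 ^ 2)‖ := by
      funext p; rw [norm_mul, norm_zpow, norm_omega, one_zpow, one_mul]
    rw [he]; exact hFnorm
  have hB' : Summable (fun p : ℤ × ℤ =>
      omega ^ (p.2 - p.1) * q ^ (p.1 ^ 2 + p.1 * p.2 + p.2 ^ 2)) := by
    apply Summable.of_norm
    have he : (fun p : ℤ × ℤ => ‖omega ^ (p.2 - p.1) * q ^ (p.1 ^ 2 + p.1 * p.2 + p.2 ^ 2)‖)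
        = fun p : ℤ × ℤ => ‖q ^ (p.1 ^ 2 + p.1 * p.2 + p.2 ^ 2)‖ := by
      funext p; rw [norm_mul, norm_zpow, norm_omega, one_zpow, one_mul]
    rw [he]; exact hFnorm
  have hG : Summable (fun p : ℤ × ℤ =>
      if (3 : ℤ) ∣ p.1 - p.2 then q ^ (p.1 ^ 2 + p.1 * p.2 + p.2 ^ 2) else 0) := by
    apply Summable.of_norm
    apply Summable.of_nonneg_of_le (fun p => norm_nonneg _) _ hFnorm
    intro p
    split
    · exact le_refl _
    · simp only [norm_zero]
      positivity
  -- Step A: symmetrization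
  have stepA : b0 q = ∑' p : ℤ × ℤ, omega ^ (p.2 - p.1) * q ^ (p.1 ^ 2 + p.1 * p.2 + p.2 ^ 2) := by
    rw [b0, ← (Equiv.prodComm ℤ ℤ).tsum_eq
      (fun p : ℤ × ℤ => omega ^ (p.1 - p.2) * q ^ (p.1 ^ 2 + p.1 * p.2 + p.2 ^ 2))]
    apply tsum_congr
    intro p
    simp only [Equiv.prodComm_apply, Prod.fst_swap, Prod.snd_swap]
    congr 1
    congr 1
    ring
  -- Step B
  have h2 : 2 * b0 q = ∑' p : ℤ × ℤ,
      (omega ^ (p.1 - p.2) + omega ^ (p.2 - p.1)) * q ^ (p.1 ^ 2 + p.1 * p.2 + p.2 ^ 2) := by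
    rw [two_mul]
    nth_rewrite 2 [stepA]
    rw [b0, ← Summable.tsum_add hB hB']
    apply tsum_congr
    intro p
    ring
  -- Step C : pointwise identity
  have hpt : ∀ p : ℤ × ℤ,
      (omega ^ (p.1 - p.2) + omega ^ (p.2 - p.1)) * q ^ (p.1 ^ 2 + p.1 * p.2 + p.2 ^ 2)
      = 3 * (if (3 : ℤ) ∣ p.1 - p.2 then q ^ (p.1 ^ 2 + p.1 * p.2 + p.2 ^ 2) else 0)
        - q ^ (p.1 ^ 2 + p.1 * p.2 + p.2 ^ 2) := by
    intro p
    rw [show p.2 - p.1 = -(p.1 - p.2) by ring, omega_key (p.1 - p.2)]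
    split
    · ring
    · ring
  -- Step D : diagonal sum equals a0 (q^3)
  have hinj : Function.Injective
      (fun ab : ℤ × ℤ => ((ab.1 + 2 * ab.2, ab.1 - ab.2) : ℤ × ℤ)) := by
    intro a b hab
    simp only [Prod.mk.injEq] at hab
    obtain ⟨hab1, hab2⟩ := hab
    exact Prod.ext (by omega) (by omega)
  have hsupp : Function.support (fun p : ℤ × ℤ =>
      if (3 : ℤ) ∣ p.1 - p.2 then q ^ (p.1 ^ 2 + p.1 * p.2 + p.2 ^ 2) else 0)
      ⊆ Set.range (fun ab : ℤ × ℤ => ((ab.1 + 2 * ab.2, ab.1 - ab.2) : ℤ × ℤ)) := by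
    intro p hp
    rw [Function.mem_support] at hp
    by_cases hd : (3 : ℤ) ∣ p.1 - p.2
    · obtain ⟨k, hk⟩ := hd
      obtain ⟨p1, p2⟩ := p
      refine ⟨(p1 - 2 * k, k), ?_⟩
      simp only [Prod.mk.injEq]
      constructor <;> omega
    · exact absurd (if_neg hd) hp
  have hD : (∑' p : ℤ × ℤ,
      if (3 : ℤ) ∣ p.1 - p.2 then q ^ (p.1 ^ 2 + p.1 * p.2 + p.2 ^ 2) else 0) = a0 (q ^ 3) := by
    rw [← hinj.tsum_eq hsupp, a0]
    apply tsum_congr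
    intro ab
    rw [if_pos ⟨ab.2, by ring⟩]
    rw [show (ab.1 + 2 * ab.2) ^ 2 + (ab.1 + 2 * ab.2) * (ab.1 - ab.2) + (ab.1 - ab.2) ^ 2
        = 3 * (ab.1 ^ 2 + ab.1 * ab.2 + ab.2 ^ 2) by ring]
    rw [zpow_mul, show (3 : ℤ) = ((3 : ℕ) : ℤ) from rfl, zpow_natCast]
  -- Combine
  have final : 2 * b0 q = 3 * a0 (q ^ 3) - a0 q := by
    rw [h2, tsum_congr hpt, Summable.tsum_sub (hG.mul_left 3) hF, tsum_mul_left, hD]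
    rfl
  linear_combination final / 2
end
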